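/- Let b, s be positive integers with b ≤ 2^s, and let (a_j : b ≤ j ≤ 2^s) be a finite sequence of complex numbers. Then the 2-variation satisfies V²(a_j : b ≤ j ≤ 2^s) ≤ √2 · ∑_{i=0}^{s} ( ∑_{j : [j2^i,(j+1)2^i) ⊆ [b,2^s]} |a_{(j+1)2^i} - a_{j2^i}|² )^{1/2} (the Rademacher–Menshov inequality). -/

import Mathlib

/-!
Every jump `a n - a m` with `m ≤ n ≤ 2^s` telescopes over dyadic blocks inside `[m, n]` using at
most two blocks of each length `2^i`: peel off the unit blocks at the two ends that are not
aligned with the even integers and recurse on `j ↦ a (2j)`. For a partition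
`t₀ < ⋯ < t_K` of `[b, 2^s]`, the blocks used at a fixed scale by different jumps are disjoint.
Hence Minkowski's inequality in `ℓ²` over the jumps, followed by `(x + y)² ≤ 2 (x² + y²)` at each
scale, bounds the `ℓ²` norm of the jumps by `√2` times the sum over scales of the `ℓ²` norms of
all dyadic differences.
-/

open scoped ENNReal

/-- The `2`-variation seminorm of a sequence `a` over the integer interval `[b, c]`. -/
noncomputable def eVar2Nat (a : ℕ → ℂ) (b c : ℕ) : ℝ≥0∞ :=
  ⨆ (K : ℕ) (t : Fin (K + 1) → ℕ) (_ : StrictMono t) (_ : ∀ i, t i ∈ Set.Icc b c),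
    (∑ i : Fin K, ENNReal.ofReal ‖a (t i.succ) - a (t i.castSucc)‖ ^ (2 : ℝ)) ^ (1 / 2 : ℝ)

open Finset Function

theorem exists_dyadic_decomposition {M : Type*} [AddCommGroup M] (a : ℕ → M) {m n s : ℕ}
    (hmn : m ≤ n) (hn : n ≤ 2 ^ s) :
    ∃ S : ℕ → Finset ℕ, (∀ i, #(S i) ≤ 2) ∧
      (∀ i, ∀ j ∈ S i, m ≤ j * 2 ^ i ∧ (j + 1) * 2 ^ i ≤ n) ∧
      a n - a m = ∑ i ∈ range (s + 1), ∑ j ∈ S i, (a ((j + 1) * 2 ^ i) - a (j * 2 ^ i)) := by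
  induction s generalizing a m n with
  | zero =>
    refine ⟨fun | 0 => Ico m n | _ + 1 => ∅, fun i => ?_, fun i j hj => ?_, ?_⟩
    · cases i with
      | zero => simp only [Nat.card_Ico]; omega
      | succ => simp
    · cases i with
      | zero => simp only [mem_Ico] at hj; omega
      | succ => simp at hj
    · simp only [zero_add, sum_range_one, pow_zero, mul_one, sum_Ico_sub a hmn]
  | succ s ih =>
    obtain rfl | hlt := hmn.eq_or_lt
    · exact ⟨fun _ => ∅, by simp, by simp, by simp⟩
    obtain ⟨S, hcard, hmem, hsum⟩ := ih (fun j => a (2 * j)) (m := (m + 1) / 2) (n := n / 2)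
      (by omega) (by rw [pow_succ] at hn; omega)
    refine ⟨fun | 0 => Ico m (2 * ((m + 1) / 2)) ∪ Ico (2 * (n / 2)) n | i + 1 => S i,
      fun i => ?_, fun i j hj => ?_, ?_⟩
    · cases i with
      | zero => grw [card_union_le]; simp only [Nat.card_Ico]; omega
      | succ i => exact hcard i
    · cases i with
      | zero => simp only [mem_union, mem_Ico] at hj; omega
      | succ i =>
        obtain ⟨hlo, hhi⟩ := hmem i j hj
        have double (k : ℕ) : k * 2 ^ (i + 1) = 2 * (k * 2 ^ i) := by ring
        rw [double, double]
        omega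
    · have hdisj : Disjoint (Ico m (2 * ((m + 1) / 2))) (Ico (2 * (n / 2)) n) :=
        Ico_disjoint_Ico_consecutive _ _ _ |>.mono_right (Ico_subset_Ico (by omega) le_rfl)
      have hcoarse : ∑ i ∈ range (s + 1), ∑ j ∈ S i,
          (a ((j + 1) * 2 ^ (i + 1)) - a (j * 2 ^ (i + 1))) =
            a (2 * (n / 2)) - a (2 * ((m + 1) / 2)) := by
        rw [hsum]
        exact sum_congr rfl fun i _ => sum_congr rfl fun j _ => by ring_nf
      rw [sum_range_succ']
      simp only [pow_zero, mul_one, hcoarse]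
      rw [sum_union hdisj, sum_Ico_sub a (by omega), sum_Ico_sub a (by omega)]
      abel

theorem disjoint_of_dyadic_blocks_le {S S' : Finset ℕ} {i n : ℕ}
    (hS : ∀ j ∈ S, (j + 1) * 2 ^ i ≤ n) (hS' : ∀ j ∈ S', n ≤ j * 2 ^ i) : Disjoint S S' :=
  disjoint_left.2 fun j hj hj' => ((hS j hj).trans (hS' j hj')).not_gt <|
    Nat.mul_lt_mul_of_pos_right (lt_add_one j) (by positivity)

namespace ENNReal

theorem Lp_sum_le_sum_Lp {ι κ : Type*} (s : Finset ι) (t : Finset κ) (f : ι → κ → ℝ≥0∞)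
    {p : ℝ} (hp : 1 ≤ p) :
    (∑ k ∈ t, (∑ i ∈ s, f i k) ^ p) ^ (1 / p) ≤ ∑ i ∈ s, (∑ k ∈ t, f i k ^ p) ^ (1 / p) := by
  induction s using Finset.cons_induction with
  | empty =>
    have hp0 : 0 < p := by linarith
    simp [zero_rpow_of_pos, hp0]
  | cons i s hi ih =>
    simp only [sum_cons]
    exact (Lp_add_le _ _ _ hp).trans (add_le_add le_rfl ih)

theorem sum_rpow_sum_le_of_pairwiseDisjoint {κ α : Type*} [Fintype κ] {p : ℝ} (hp : 1 ≤ p)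
    {N : ℕ} (F : α → ℝ≥0∞) (S : κ → Finset α) (T : Finset α) (hcard : ∀ k, #(S k) ≤ N)
    (hdisj : Pairwise (Disjoint on S)) (hsub : ∀ k, S k ⊆ T) :
    ∑ k, (∑ j ∈ S k, F j) ^ p ≤ (N : ℝ≥0∞) ^ (p - 1) * ∑ j ∈ T, F j ^ p := by
  classical
  calc ∑ k, (∑ j ∈ S k, F j) ^ p
      ≤ ∑ k, (N : ℝ≥0∞) ^ (p - 1) * ∑ j ∈ S k, F j ^ p := by
        refine sum_le_sum fun k _ => (rpow_sum_le_const_mul_sum_rpow _ _ hp).trans ?_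
        gcongr
        exact_mod_cast hcard k
    _ = (N : ℝ≥0∞) ^ (p - 1) * ∑ j ∈ univ.biUnion S, F j ^ p := by
        rw [sum_biUnion (hdisj.set_pairwise _), mul_sum]
    _ ≤ _ := by
        gcongr
        exact biUnion_subset.2 fun k _ => hsub k

theorem Lp_le_mul_sum_Lp_of_pairwiseDisjoint {ι κ α : Type*} [Fintype κ] {p : ℝ} (hp : 1 ≤ p)
    {N : ℕ} (I : Finset ι) (d : κ → ℝ≥0∞) (F : ι → α → ℝ≥0∞) (S : κ → ι → Finset α)
    (T : ι → Finset α) (hcard : ∀ k i, #(S k i) ≤ N)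
    (hdisj : ∀ i, Pairwise (Disjoint on fun k => S k i)) (hsub : ∀ k i, S k i ⊆ T i)
    (hd : ∀ k, d k ≤ ∑ i ∈ I, ∑ j ∈ S k i, F i j) :
    (∑ k, d k ^ p) ^ (1 / p) ≤
      (N : ℝ≥0∞) ^ ((p - 1) / p) * ∑ i ∈ I, (∑ j ∈ T i, F i j ^ p) ^ (1 / p) :=
  calc (∑ k, d k ^ p) ^ (1 / p)
      ≤ (∑ k, (∑ i ∈ I, ∑ j ∈ S k i, F i j) ^ p) ^ (1 / p) := by
        gcongr with k
        exact hd k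
    _ ≤ ∑ i ∈ I, (∑ k, (∑ j ∈ S k i, F i j) ^ p) ^ (1 / p) := Lp_sum_le_sum_Lp _ _ _ hp
    _ ≤ ∑ i ∈ I, ((N : ℝ≥0∞) ^ (p - 1) * ∑ j ∈ T i, F i j ^ p) ^ (1 / p) := by
        gcongr with i
        exact sum_rpow_sum_le_of_pairwiseDisjoint hp _ _ _ (hcard · i) (hdisj i) (hsub · i)
    _ = _ := by
        have hp0 : 0 < p := by linarith
        rw [mul_sum]
        refine sum_congr rfl fun i _ => ?_
        rw [mul_rpow_of_nonneg _ _ (by positivity), ← rpow_mul, mul_one_div]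

end ENNReal

theorem rademacher_menshov_general (b s : ℕ) (a : ℕ → ℂ) :
    eVar2Nat a b (2 ^ s) ≤
      ENNReal.ofReal (Real.sqrt 2) *
        ∑ i ∈ Finset.range (s + 1),
          (∑ j ∈ (Finset.range (2 ^ s)).filter
              (fun j => b ≤ j * 2 ^ i ∧ (j + 1) * 2 ^ i ≤ 2 ^ s),
            ENNReal.ofReal ‖a ((j + 1) * 2 ^ i) - a (j * 2 ^ i)‖ ^ (2 : ℝ)) ^ (1 / 2 : ℝ) := by
  simp only [eVar2Nat, iSup_le_iff, ofReal_norm]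
  intro K t ht htI
  choose S hcard hmem hsum using fun k : Fin K =>
    exists_dyadic_decomposition a (ht k.castSucc_lt_succ).le (htI k.succ).2
  have hsqrt : ENNReal.ofReal √2 = ((2 : ℕ) : ℝ≥0∞) ^ ((2 - 1) / 2 : ℝ) := by
    rw [Real.sqrt_eq_rpow, ← ENNReal.ofReal_rpow_of_pos two_pos]
    norm_num
  rw [hsqrt]
  refine ENNReal.Lp_le_mul_sum_Lp_of_pairwiseDisjoint (p := 2) (by norm_num) _ _ _ S _ hcard
    (fun i => (pairwise_disjoint_on _).2 fun k k' hkk' => ?_) (fun k i j hj => ?_) fun k => ?_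
  · exact disjoint_of_dyadic_blocks_le (fun j hj => (hmem k i j hj).2)
      fun j hj => (ht.monotone (Fin.succ_le_castSucc_iff.2 hkk')).trans (hmem k' i j hj).1
  · obtain ⟨hlo, hhi⟩ := hmem k i j hj
    have hj_lt : j < 2 ^ s :=
      (lt_add_one j).trans_le ((Nat.le_mul_of_pos_right _ (Nat.two_pow_pos i)).trans
        (hhi.trans (htI _).2))
    exact mem_filter.2 ⟨mem_range.2 hj_lt, (htI _).1.trans hlo, hhi.trans (htI _).2⟩
  · rw [hsum k]
    exact (enorm_sum_le _ _).trans (sum_le_sum fun i _ => enorm_sum_le _ _)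

/-- Rademacher–Menshov: for positive integers `b ≤ 2^s`,
`V²(a_j : b ≤ j ≤ 2^s) ≤ √2 · ∑_{i=0}^{s} (∑_{[j2^i,(j+1)2^i) ⊆ [b,2^s]}
|a_{(j+1)2^i} - a_{j2^i}|²)^{1/2}`. -/
theorem rademacher_menshov (b s : ℕ) (hb : 0 < b) (hs : 0 < s) (hbs : b ≤ 2 ^ s)
    (a : ℕ → ℂ) :
    eVar2Nat a b (2 ^ s) ≤
      ENNReal.ofReal (Real.sqrt 2) *
        ∑ i ∈ Finset.range (s + 1),
          (∑ j ∈ (Finset.range (2 ^ s)).filter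
              (fun j => b ≤ j * 2 ^ i ∧ (j + 1) * 2 ^ i ≤ 2 ^ s),
            ENNReal.ofReal ‖a ((j + 1) * 2 ^ i) - a (j * 2 ^ i)‖ ^ (2 : ℝ)) ^ (1 / 2 : ℝ) :=
  rademacher_menshov_general b s a
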